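/- The number of points of the form p/b^n (p ∈ Z^d) lying in the product missing digit set K, expressed via the IFS, is at most 2^d · N^n: the set of such points is contained in ∪_{x ∈ {0,1}^d} ∪_{i ∈ Λ^n} {g_i(x)} when {0, b-1} ⊂ J_i for each i. -/

import Mathlib

/-- The base-`b` missing digit set `K_b(J)`. -/
def missingDigitSet (b : ℕ) (J : Finset ℕ) : Set ℝ :=
  {x | ∃ a : ℕ → ℕ, (∀ n, a n ∈ J) ∧ x = ∑' n : ℕ, (a n : ℝ) / (b : ℝ) ^ (n + 1)}

/-- The product missing digit set `K = ∏ K_b(J_i) ⊆ ℝ^d`. -/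
def prodMissingDigitSet (b : ℕ) {d : ℕ} (J : Fin d → Finset ℕ) : Set (Fin d → ℝ) :=
  {x | ∀ i, x i ∈ missingDigitSet b (J i)}

/-- The composition `g_i = g_{i_1} ∘ ⋯ ∘ g_{i_n}` of the product IFS maps
`g_j(x)_i = (x_i + j_i)/b`. -/
noncomputable def gWord (b : ℕ) {d : ℕ} : List (Fin d → ℕ) → (Fin d → ℝ) → (Fin d → ℝ)
  | [] => id
  | j :: l => fun x i => (gWord b l x i + (j i : ℝ)) / (b : ℝ)

/-!
Expand each coordinate of `y ∈ K` in base `b`, with digits in `J i`. Splitting off the first `n`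
digits gives `y = g_c(t)`, where `c` is the word of the first `n` digit vectors and `t ∈ [0, 1]^d`
is the vector of tails `0.c_{n+1}c_{n+2}…`. If `b ^ n • y` is an integer vector, then so is
`t = b ^ n • y - (the integer vector read off c)`, hence `t ∈ {0,1}^d`. This leaves `2^d` choices
for `t` and `N^n` for `c`.
-/

open Finset Real

namespace Real

theorem exists_natCast_eq_pow_mul_sum_ofDigitsTerm {b : ℕ} (c : ℕ → Fin b) (n : ℕ) :
    ∃ m : ℕ, (b : ℝ) ^ n * ∑ k ∈ range n, ofDigitsTerm c k = m := by
  have hb : (b : ℝ) ≠ 0 := by exact_mod_cast (Fin.pos (c 0)).ne'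
  induction n with
  | zero => exact ⟨0, by simp⟩
  | succ n ih =>
    obtain ⟨m, hm⟩ := ih
    refine ⟨b * m + c n, ?_⟩
    rw [sum_range_succ, mul_add, pow_succ', mul_assoc, hm, ofDigitsTerm, ← pow_succ',
      mul_left_comm, mul_inv_cancel₀ (pow_ne_zero _ hb)]
    push_cast
    ring

theorem ofDigits_shift_eq_zero_or_one_of_ofDigits_eq_div_pow {b : ℕ} {c : ℕ → Fin b} {n : ℕ}
    {p : ℤ} (h : ofDigits c = p / (b : ℝ) ^ n) :
    ofDigits (fun k => c (k + n)) = 0 ∨ ofDigits (fun k => c (k + n)) = 1 := by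
  have hb : (b : ℝ) ^ n ≠ 0 := pow_ne_zero _ (by exact_mod_cast (Fin.pos (c 0)).ne')
  obtain ⟨m, hm⟩ := exists_natCast_eq_pow_mul_sum_ofDigitsTerm c n
  have ht : ofDigits (fun k => c (k + n)) = ((p - m : ℤ) : ℝ) := by
    rw [ofDigits_eq_sum_add_ofDigits c n, eq_div_iff hb] at h
    push_cast
    rw [← h, ← hm]
    field_simp
    ring
  have h0 := ofDigits_nonneg (fun k => c (k + n))
  have h1 := ofDigits_le_one (fun k => c (k + n))
  rw [ht] at h0 h1
  norm_cast at h0 h1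
  rcases (by omega : p - m = 0 ∨ p - m = 1) with h | h <;> simp [ht, h]

end Real

theorem gWord_ofFn (b : ℕ) {d n : ℕ} (f : Fin n → Fin d → ℕ) (x : Fin d → ℝ) (i : Fin d) :
    gWord b (List.ofFn f) x i
      = ∑ k : Fin n, (f k i : ℝ) * ((b : ℝ) ^ (k + 1 : ℕ))⁻¹ + ((b : ℝ) ^ n)⁻¹ * x i := by
  induction n with
  | zero => simp [gWord]
  | succ n ih =>
    rw [List.ofFn_succ]
    change (gWord b (List.ofFn fun k => f k.succ) x i + f 0 i) / b = _
    have hterm (k : Fin n) : (f k.succ i : ℝ) * ((b : ℝ) ^ (k + 1 : ℕ))⁻¹ / b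
        = f k.succ i * ((b : ℝ) ^ (k.succ + 1 : ℕ))⁻¹ := by
      simp only [Fin.val_succ, pow_succ, mul_inv]
      ring
    rw [ih, Fin.sum_univ_succ, add_div, add_div, sum_div, sum_congr rfl fun k _ => hterm k]
    simp only [Fin.val_zero, pow_succ, mul_inv]
    ring

theorem exists_ofDigits_eq_of_mem_missingDigitSet {b : ℕ} {J : Finset ℕ} (hJ : J ⊆ range b)
    {x : ℝ} (hx : x ∈ missingDigitSet b J) :
    ∃ c : ℕ → Fin b, (∀ k, (c k : ℕ) ∈ J) ∧ ofDigits c = x := by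
  obtain ⟨a, ha, rfl⟩ := hx
  refine ⟨fun k => ⟨a k, mem_range.1 (hJ (ha k))⟩, ha, ?_⟩
  simp [ofDigits, ofDigitsTerm, div_eq_mul_inv]

theorem setOf_mem_prodMissingDigitSet_and_eq_div_pow_subset {b d : ℕ} (n : ℕ)
    {J : Fin d → Finset ℕ} (hJ : ∀ i, J i ⊆ range b) :
    {y | y ∈ prodMissingDigitSet b J ∧ ∃ p : Fin d → ℤ, ∀ i, y i = (p i : ℝ) / (b : ℝ) ^ n}
      ⊆ ⋃ x ∈ {x : Fin d → ℝ | ∀ i, x i = 0 ∨ x i = 1},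
          ⋃ l ∈ {l : List (Fin d → ℕ) | l.length = n ∧ ∀ j ∈ l, ∀ i, j i ∈ J i},
            {gWord b l x} := by
  rintro y ⟨hy, p, hp⟩
  choose c hcJ hcy using fun i => exists_ofDigits_eq_of_mem_missingDigitSet (hJ i) (hy i)
  simp only [Set.mem_iUnion, Set.mem_singleton_iff, Set.mem_ofPred_eq, exists_prop]
  refine ⟨fun i => ofDigits (fun k => c i (k + n)),
    fun i => ofDigits_shift_eq_zero_or_one_of_ofDigits_eq_div_pow ((hcy i).trans (hp i)),
    List.ofFn fun k i => c i k, ⟨List.length_ofFn, ?_⟩, ?_⟩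
  · simp only [List.mem_ofFn, forall_exists_index]
    rintro _ k rfl i
    exact hcJ i k
  · funext i
    rw [gWord_ofFn, ← hcy i, ofDigits_eq_sum_add_ofDigits (c i) n,
      ← Fin.sum_univ_eq_sum_range (ofDigitsTerm (c i))]
    rfl

theorem encard_setOf_length_eq_and_forall_mem {α : Type*} (A : Set α) (n : ℕ) :
    {l : List α | l.length = n ∧ ∀ a ∈ l, a ∈ A}.encard = A.encard ^ n := by
  have hofFn : {l : List α | l.length = n ∧ ∀ a ∈ l, a ∈ A}
      = List.ofFn '' Set.univ.pi fun _ : Fin n => A := by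
    ext l
    constructor
    · rintro ⟨rfl, hl⟩
      exact ⟨fun k => l[k], fun k _ => hl _ (List.getElem_mem _), List.ofFn_getElem⟩
    · rintro ⟨f, hf, rfl⟩
      simp only [Set.mem_ofPred_eq, List.length_ofFn, List.mem_ofFn, forall_exists_index,
        true_and]
      rintro _ k rfl
      exact hf k (Set.mem_univ k)
  rw [hofFn, List.ofFn_injective.encard_image, Set.encard_pi_eq_prod_encard, prod_const,
    card_univ, Fintype.card_fin]

theorem encard_biUnion_biUnion_singleton_le {α β γ : Type*} (f : α → β → γ) (s : Set α)
    (t : Set β) : (⋃ x ∈ s, ⋃ y ∈ t, {f x y}).encard ≤ s.encard * t.encard := by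
  have hprod : ⋃ x ∈ s, ⋃ y ∈ t, {f x y} = Function.uncurry f '' s ×ˢ t := by
    rw [Set.image_uncurry_prod, ← Set.iUnion_image_left]
    simp only [Set.image_eq_iUnion]
  rw [hprod, ← Set.encard_prod]
  exact Set.encard_image_le _ _

theorem stmt16_general (b d n : ℕ) (J : Fin d → Finset ℕ)
    (hJ : ∀ i, J i ⊂ Finset.range b) :
    ({y | y ∈ prodMissingDigitSet b J ∧
        ∃ p : Fin d → ℤ, ∀ i, y i = (p i : ℝ) / (b : ℝ) ^ n}
      ⊆ ⋃ x ∈ {x : Fin d → ℝ | ∀ i, x i = 0 ∨ x i = 1},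
          ⋃ l ∈ {l : List (Fin d → ℕ) | l.length = n ∧ ∀ j ∈ l, ∀ i, j i ∈ J i},
            {gWord b l x}) ∧
    Set.ncard {y | y ∈ prodMissingDigitSet b J ∧
        ∃ p : Fin d → ℤ, ∀ i, y i = (p i : ℝ) / (b : ℝ) ^ n}
      ≤ 2 ^ d * (∏ i, (J i).card) ^ n := by
  have hsub := setOf_mem_prodMissingDigitSet_and_eq_div_pow_subset n fun i => (hJ i).subset
  have hcorners : {x : Fin d → ℝ | ∀ i, x i = 0 ∨ x i = 1} = Set.univ.pi fun _ => {0, 1} := by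
    ext x
    simp
  have hwords : {l : List (Fin d → ℕ) | l.length = n ∧ ∀ j ∈ l, ∀ i, j i ∈ J i}
      = {l | l.length = n ∧ ∀ j ∈ l, j ∈ Set.univ.pi fun i => (J i : Set ℕ)} := by
    ext l
    simp
  refine ⟨hsub, ENat.toNat_le_of_le_natCast ?_⟩
  calc _ ≤ _ := Set.encard_le_encard hsub
    _ ≤ _ := encard_biUnion_biUnion_singleton_le _ _ _
    _ = _ := by
      rw [hcorners, hwords, encard_setOf_length_eq_and_forall_mem, Set.encard_pi_eq_prod_encard,
        Set.encard_pi_eq_prod_encard, Set.encard_pair zero_ne_one]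
      push_cast
      simp

/-- When `{0, b-1} ⊆ J_i` for each `i`, the set of points of the form `p/b^n` (`p ∈ ℤ^d`)
lying in the product missing digit set `K` is contained in
`⋃_{x ∈ {0,1}^d} ⋃_{i ∈ Λ^n} {g_i(x)}`, and hence has at most `2^d · N^n` elements,
where `N = ∏ #J_i`. -/
theorem stmt16 (b d n : ℕ) (hb : 3 ≤ b) (J : Fin d → Finset ℕ)
    (hJ : ∀ i, J i ⊂ Finset.range b) (h0 : ∀ i, 0 ∈ J i) (hb1 : ∀ i, b - 1 ∈ J i) :
    ({y | y ∈ prodMissingDigitSet b J ∧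
        ∃ p : Fin d → ℤ, ∀ i, y i = (p i : ℝ) / (b : ℝ) ^ n}
      ⊆ ⋃ x ∈ {x : Fin d → ℝ | ∀ i, x i = 0 ∨ x i = 1},
          ⋃ l ∈ {l : List (Fin d → ℕ) | l.length = n ∧ ∀ j ∈ l, ∀ i, j i ∈ J i},
            {gWord b l x}) ∧
    Set.ncard {y | y ∈ prodMissingDigitSet b J ∧
        ∃ p : Fin d → ℤ, ∀ i, y i = (p i : ℝ) / (b : ℝ) ^ n}
      ≤ 2 ^ d * (∏ i, (J i).card) ^ n :=
  stmt16_general b d n J hJ
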